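/- arXiv:0907.3675 — 6 statements merged into one kernel-verified Lean document; each statement's English description precedes it below -/
import Mathlib

section
/- Let α, β, γ, δ, ε, J be integers with α ≠ 0 and β² − 4αγ = k² for a positive integer k, and suppose I = k²(δ² − 4αJ) − (2αε − βδ)² ≠ 0. Then the set of pairs of integers (x, y) satisfying αx² + βxy + γy² + δx + εy + J = 0 is finite. -/
theorem stmt_2 (α β γ δ ε J k : ℤ) (hα : α ≠ 0) (hkpos : 0 < k)
    (hk : β ^ 2 - 4 * α * γ = k ^ 2)
    (hI : k ^ 2 * (δ ^ 2 - 4 * α * J) - (2 * α * ε - β * δ) ^ 2 ≠ 0) :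
    {p : ℤ × ℤ |
      α * p.1 ^ 2 + β * p.1 * p.2 + γ * p.2 ^ 2 + δ * p.1 + ε * p.2 + J = 0}.Finite := by
  set I : ℤ := k ^ 2 * (δ ^ 2 - 4 * α * J) - (2 * α * ε - β * δ) ^ 2 with hIdef
  set f : ℤ × ℤ → ℤ × ℤ := fun p =>
    (k * (2 * α * p.1 + β * p.2 + δ) - (k ^ 2 * p.2 - (2 * α * ε - β * δ)),
     k * (2 * α * p.1 + β * p.2 + δ) + (k ^ 2 * p.2 - (2 * α * ε - β * δ))) with hf
  have hk0 : k ≠ 0 := hkpos.ne'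
  have hfinj : Function.Injective f := by
    intro p q h
    have h1 := congrArg Prod.fst h
    have h2 := congrArg Prod.snd h
    simp only [hf] at h1 h2
    have hw : k ^ 2 * p.2 = k ^ 2 * q.2 := by linarith
    have hy : p.2 = q.2 := by
      have : k ^ 2 ≠ 0 := pow_ne_zero _ hk0
      exact mul_left_cancel₀ this hw
    have hu : k * (2 * α * p.1) = k * (2 * α * q.1) := by
      rw [hy] at h1; linarith [hy]
    have hx : p.1 = q.1 := by
      have h2α : k * (2 * α) ≠ 0 := by
        apply mul_ne_zero hk0; simpa using hα
      have : k * (2 * α) * p.1 = k * (2 * α) * q.1 := by ring_nf; ring_nf at hu; linarith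
      exact mul_left_cancel₀ h2α this
    exact Prod.ext hx hy
  have hT : (Set.Icc (-|I|) |I| ×ˢ Set.Icc (-|I|) |I|).Finite :=
    (Set.finite_Icc _ _).prod (Set.finite_Icc _ _)
  apply Set.Finite.subset (hT.preimage hfinj.injOn)
  intro p hp
  simp only [Set.mem_setOf_eq] at hp
  have hprod : (f p).1 * (f p).2 = I := by
    simp only [hf, hIdef]
    linear_combination 4 * α * k ^ 2 * hp + k ^ 2 * p.2 ^ 2 * hk
  have habs : ∀ a b : ℤ, a * b = I → a ∈ Set.Icc (-|I|) |I| := by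
    intro a b hab
    have hdvd : a ∣ I := Dvd.intro b (by linarith [hab])
    have : |a| ≤ |I| := Int.le_of_dvd (abs_pos.mpr hI) ((abs_dvd _ _).mpr ((dvd_abs _ _).mpr hdvd))
    constructor <;> [linarith [neg_abs_le a]; linarith [le_abs_self a]]
  simp only [Set.mem_preimage, Set.mem_prod]
  exact ⟨habs _ _ hprod, habs _ _ (by rw [mul_comm] at hprod; exact hprod)⟩
end

section
/- Let α, β, γ be integers with α ≠ 0, γ ≠ 0, and β² − 4αγ = k² for a positive integer k. Set d₁ = gcd(2α, β + k), ρ₁ = 2α/d₁, v₁ = (β + k)/d₁, and d₂ = gcd(2α, β − k), ρ₂ = 2α/d₂, v₂ = (β − k)/d₂. Then a pair of integers (x, y) satisfies αx² + βxy + γy² = 0 if and only if there exists an integer t with (x, y) = (−v₁ t, ρ₁ t) or (x, y) = (−v₂ t, ρ₂ t). -/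
lemma lin_aux (a b x y : ℤ) (ha : a ≠ 0) :
    a * x + b * y = 0 ↔
      ∃ t : ℤ, x = -(b / (Int.gcd a b : ℤ)) * t ∧ y = (a / (Int.gcd a b : ℤ)) * t := by
  set d : ℤ := (Int.gcd a b : ℤ) with hd
  have hdne : d ≠ 0 := by
    simpa [hd, Int.gcd_eq_zero_iff] using fun h : a = 0 ∧ b = 0 => ha h.1
  have hda : d ∣ a := Int.gcd_dvd_left a b
  have hdb : d ∣ b := Int.gcd_dvd_right a b
  set ρ : ℤ := a / d with hρ
  set v : ℤ := b / d with hv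
  have haρ : a = d * ρ := (Int.ediv_mul_cancel hda).symm.trans (mul_comm _ _)
  have hbv : b = d * v := (Int.ediv_mul_cancel hdb).symm.trans (mul_comm _ _)
  have hρne : ρ ≠ 0 := by
    intro h; apply ha; rw [haρ, h, mul_zero]
  have hcop : IsCoprime ρ v := by
    rw [Int.isCoprime_iff_gcd_eq_one]
    exact Int.gcd_div_gcd_div_gcd (Int.gcd_pos_iff.2 (Or.inl ha))
  constructor
  · intro h
    have h2 : ρ * x = -(v * y) := by
      have : d * (ρ * x + v * y) = 0 := by rw [mul_add, ← mul_assoc, ← mul_assoc, ← haρ, ← hbv]; exact h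
      have := (mul_eq_zero.1 this).resolve_left hdne
      linarith
    have hdvd : ρ ∣ v * y := ⟨-x, by linarith [h2]⟩
    obtain ⟨t, ht⟩ := hcop.dvd_of_dvd_mul_left hdvd
    refine ⟨t, ?_, ht⟩
    have : ρ * x = ρ * (-v * t) := by rw [h2, ht]; ring
    exact mul_left_cancel₀ hρne this
  · rintro ⟨t, hx, hy⟩
    rw [hx, hy, haρ, hbv]; ring

theorem stmt_6 (α β γ k : ℤ) (hα : α ≠ 0) (hγ : γ ≠ 0) (hkpos : 0 < k)
    (hk : β ^ 2 - 4 * α * γ = k ^ 2) :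
    ∀ x y : ℤ,
      α * x ^ 2 + β * x * y + γ * y ^ 2 = 0 ↔
      ∃ t : ℤ,
        (x = -((β + k) / (Int.gcd (2 * α) (β + k) : ℤ)) * t ∧
         y = (2 * α / (Int.gcd (2 * α) (β + k) : ℤ)) * t) ∨
        (x = -((β - k) / (Int.gcd (2 * α) (β - k) : ℤ)) * t ∧
         y = (2 * α / (Int.gcd (2 * α) (β - k) : ℤ)) * t) := by
  intro x y
  have h2α : (2 : ℤ) * α ≠ 0 := by simpa using hα
  have hfac : (4 * α) * (α * x ^ 2 + β * x * y + γ * y ^ 2) =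
      (2 * α * x + (β + k) * y) * (2 * α * x + (β - k) * y) := by nlinarith [hk]
  constructor
  · intro h
    have : (2 * α * x + (β + k) * y) * (2 * α * x + (β - k) * y) = 0 := by
      rw [← hfac, h, mul_zero]
    rcases mul_eq_zero.1 this with h1 | h1
    · obtain ⟨t, ht1, ht2⟩ := (lin_aux (2 * α) (β + k) x y h2α).1 h1
      exact ⟨t, Or.inl ⟨ht1, ht2⟩⟩
    · obtain ⟨t, ht1, ht2⟩ := (lin_aux (2 * α) (β - k) x y h2α).1 h1
      exact ⟨t, Or.inr ⟨ht1, ht2⟩⟩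
  · rintro ⟨t, h | h⟩
    · have h1 : 2 * α * x + (β + k) * y = 0 :=
        (lin_aux (2 * α) (β + k) x y h2α).2 ⟨t, h.1, h.2⟩
      have h4 : (4 : ℤ) * α ≠ 0 := by simpa using hα
      have := hfac
      rw [h1, zero_mul] at this
      exact (mul_eq_zero.1 this).resolve_left h4
    · have h1 : 2 * α * x + (β - k) * y = 0 :=
        (lin_aux (2 * α) (β - k) x y h2α).2 ⟨t, h.1, h.2⟩
      have h4 : (4 : ℤ) * α ≠ 0 := by simpa using hα
      have := hfac
      rw [h1, mul_zero] at this
      exact (mul_eq_zero.1 this).resolve_left h4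
end

section
/- Let β, γ, δ, ε, J be integers with β² − 4γ = 1, γ ≠ 0, and suppose I = δ² − 4J − (2ε − βδ)² = 2ⁿ for some integer n ≥ 2. Then for every integer i with 2 ≤ i ≤ n and every e ∈ {1, −1}, the numbers xᵢ = (e·2^{i−2}(β + 1) − e·2^{n−i}(β − 1) − δ − (2ε − βδ)β)/2 and yᵢ = e·2^{n−i} − e·2^{i−2} + (2ε − βδ) are integers and satisfy x² + βxy + γy² + δx + εy + J = 0. -/
theorem stmt_11 (β γ δ ε J : ℤ) (hβγ : β ^ 2 - 4 * γ = 1) (hγ : γ ≠ 0)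
    (n : ℕ) (hn : 2 ≤ n)
    (hI : δ ^ 2 - 4 * J - (2 * ε - β * δ) ^ 2 = 2 ^ n) :
    ∀ i : ℕ, 2 ≤ i → i ≤ n → ∀ e : ℤ, (e = 1 ∨ e = -1) →
      ∃ x : ℤ,
        2 * x = e * 2 ^ (i - 2) * (β + 1) - e * 2 ^ (n - i) * (β - 1) - δ -
                  (2 * ε - β * δ) * β ∧
        x ^ 2 + β * x * (e * 2 ^ (n - i) - e * 2 ^ (i - 2) + (2 * ε - β * δ)) +
          γ * (e * 2 ^ (n - i) - e * 2 ^ (i - 2) + (2 * ε - β * δ)) ^ 2 +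
          δ * x + ε * (e * 2 ^ (n - i) - e * 2 ^ (i - 2) + (2 * ε - β * δ)) + J = 0 := by
  intro i hi2 hin e he
  have he2 : e ^ 2 = 1 := by rcases he with h | h <;> simp [h]
  have hAB : (2:ℤ) ^ (i - 2) * 2 ^ (n - i) = 2 ^ (n - 2) := by
    rw [← pow_add]; congr 1; omega
  have h2n : (2:ℤ) ^ n = 4 * 2 ^ (n - 2) := by
    have h : (2:ℤ) ^ (n - 2 + 2) = 4 * 2 ^ (n - 2) := by rw [pow_add]; ring
    rwa [show n - 2 + 2 = n from by omega] at h
  -- β is odd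
  rcases Int.even_or_odd β with ⟨m, hm⟩ | ⟨m, hm⟩
  · exfalso
    have h4 : 4 * (m * m) - 4 * γ = 1 := by subst hm; linear_combination hβγ
    set k := m * m with hk
    omega
  · obtain ⟨x, hx⟩ : (2:ℤ) ∣ (e * 2 ^ (i - 2) * (β + 1) - e * 2 ^ (n - i) * (β - 1) - δ -
        (2 * ε - β * δ) * β) :=
      ⟨e * 2 ^ (i - 2) * (m + 1) - e * 2 ^ (n - i) * m + 2 * γ * δ - ε * β, by
        subst hm; linear_combination δ * hβγ⟩
    refine ⟨x, hx.symm, ?_⟩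
    have key : 4 * (x ^ 2 + β * x * (e * 2 ^ (n - i) - e * 2 ^ (i - 2) + (2 * ε - β * δ)) +
          γ * (e * 2 ^ (n - i) - e * 2 ^ (i - 2) + (2 * ε - β * δ)) ^ 2 +
          δ * x + ε * (e * 2 ^ (n - i) - e * 2 ^ (i - 2) + (2 * ε - β * δ)) + J) = 0 := by
      linear_combination
        (-(2 * x + (e * 2 ^ (i - 2) * (β + 1) - e * 2 ^ (n - i) * (β - 1) - δ -
            (2 * ε - β * δ) * β) +
          2 * β * (e * 2 ^ (n - i) - e * 2 ^ (i - 2) + (2 * ε - β * δ)) + 2 * δ)) * hx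
        + (-(e * 2 ^ (n - i) - e * 2 ^ (i - 2) + (2 * ε - β * δ)) ^ 2) * hβγ
        + (-1 : ℤ) * hI
        + (4 * e ^ 2) * hAB
        + (4 * 2 ^ (n - 2)) * he2
        - h2n
    linarith
end

section
/- Let β, γ, δ, ε, J be integers with β² − 4γ = 1, γ ≠ 0, and suppose I = δ² − 4J − (2ε − βδ)² = 2ⁿ for some integer n ≥ 2. Then a pair of integers (x, y) satisfies x² + βxy + γy² + δx + εy + J = 0 if and only if there exist an integer i with 2 ≤ i ≤ n and e ∈ {1, −1} such that x = (e·2^{i−2}(β + 1) − e·2^{n−i}(β − 1) − δ − (2ε − βδ)β)/2 and y = e·2^{n−i} − e·2^{i−2} + (2ε − βδ). -/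
lemma factor_pow2 (A B : ℤ) (n : ℕ) (key : A * B = 2 ^ n)
    (hA2 : 2 ∣ A) (hB2 : 2 ∣ B) :
    ∃ j : ℕ, 1 ≤ j ∧ j + 1 ≤ n ∧ ∃ e : ℤ, (e = 1 ∨ e = -1) ∧
      A = e * 2 ^ j ∧ B = e * 2 ^ (n - j) := by
  have hAd : A.natAbs ∣ 2 ^ n := by
    have h1 : A ∣ (2 : ℤ) ^ n := ⟨B, key.symm⟩
    have h2 := Int.natAbs_dvd_natAbs.mpr h1
    simpa only [Int.natAbs_pow, Int.natAbs_natCast, Int.reduceAbs] using h2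
  have hBd : B.natAbs ∣ 2 ^ n := by
    have h1 : B ∣ (2 : ℤ) ^ n := ⟨A, by rw [mul_comm]; exact key.symm⟩
    have h2 := Int.natAbs_dvd_natAbs.mpr h1
    simpa only [Int.natAbs_pow, Int.natAbs_natCast, Int.reduceAbs] using h2
  obtain ⟨j, hjn, hj⟩ := (Nat.dvd_prime_pow Nat.prime_two).mp hAd
  obtain ⟨k, hkn, hk⟩ := (Nat.dvd_prime_pow Nat.prime_two).mp hBd
  have hmul : 2 ^ j * 2 ^ k = 2 ^ n := by
    rw [← hj, ← hk, ← Int.natAbs_mul, key]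
    simp [Int.natAbs_pow]
  have hjk : j + k = n := by
    have h : (2 : ℕ) ^ (j + k) = 2 ^ n := by rw [pow_add]; exact hmul
    exact Nat.pow_right_injective (le_refl 2) h
  have hAn : (2 : ℕ) ∣ A.natAbs := by
    have := Int.natAbs_dvd_natAbs.mpr hA2; simpa using this
  have hBn : (2 : ℕ) ∣ B.natAbs := by
    have := Int.natAbs_dvd_natAbs.mpr hB2; simpa using this
  have hj1 : 1 ≤ j := by
    rcases Nat.eq_zero_or_pos j with rfl | h
    · rw [hj, pow_zero] at hAn; omega
    · exact h
  have hk1 : 1 ≤ k := by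
    rcases Nat.eq_zero_or_pos k with rfl | h
    · rw [hk, pow_zero] at hBn; omega
    · exact h
  have hjn' : j + 1 ≤ n := by omega
  have hnk : n - j = k := by omega
  have h2n : (2 : ℤ) ^ j * 2 ^ k = 2 ^ n := by
    rw [← pow_add, hjk]
  rcases Int.natAbs_eq A with h | h
  · have hA' : A = 2 ^ j := by rw [h, hj]; push_cast; ring
    have hB' : B = 2 ^ k := by
      have h3 : (2 : ℤ) ^ j * B = 2 ^ j * 2 ^ k := by
        rw [h2n, ← key, hA']
      exact mul_left_cancel₀ (pow_ne_zero j two_ne_zero) h3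
    exact ⟨j, hj1, hjn', 1, Or.inl rfl, by rw [hA']; ring, by rw [hB', hnk]; ring⟩
  · have hA' : A = -2 ^ j := by rw [h, hj]; push_cast; ring
    have hB' : B = -2 ^ k := by
      have h3 : (2 : ℤ) ^ j * (-B) = 2 ^ j * 2 ^ k := by
        rw [h2n, ← key, hA']; ring
      have := mul_left_cancel₀ (pow_ne_zero j two_ne_zero) h3
      linarith
    exact ⟨j, hj1, hjn', -1, Or.inr rfl, by rw [hA']; ring, by rw [hB', hnk]; ring⟩

theorem stmt_12 (β γ δ ε J : ℤ) (hβγ : β ^ 2 - 4 * γ = 1) (hγ : γ ≠ 0)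
    (n : ℕ) (hn : 2 ≤ n)
    (hI : δ ^ 2 - 4 * J - (2 * ε - β * δ) ^ 2 = 2 ^ n) :
    ∀ x y : ℤ,
      x ^ 2 + β * x * y + γ * y ^ 2 + δ * x + ε * y + J = 0 ↔
      ∃ i : ℕ, ∃ e : ℤ, 2 ≤ i ∧ i ≤ n ∧ (e = 1 ∨ e = -1) ∧
        2 * x = e * 2 ^ (i - 2) * (β + 1) - e * 2 ^ (n - i) * (β - 1) - δ -
                  (2 * ε - β * δ) * β ∧
        y = e * 2 ^ (n - i) - e * 2 ^ (i - 2) + (2 * ε - β * δ) := by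
  obtain ⟨m, hm⟩ : ∃ m : ℤ, β = 2 * m + 1 := by
    rcases Int.even_or_odd β with ⟨m, hm⟩ | ⟨m, hm⟩
    · exfalso
      have h1 : β ^ 2 = 4 * (m * m) := by rw [hm]; ring
      omega
    · exact ⟨m, hm⟩
  intro x y
  constructor
  · intro heq
    have key : (2 * x + (β - 1) * y + δ + (2 * ε - β * δ)) *
        (2 * x + (β + 1) * y + δ - (2 * ε - β * δ)) = 2 ^ n := by
      linear_combination 4 * heq + y ^ 2 * hβγ + hI
    have hdA : (2 : ℤ) ∣ (2 * x + (β - 1) * y + δ + (2 * ε - β * δ)) :=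
      ⟨x + m * y + ε - m * δ, by rw [hm]; ring⟩
    have hdB : (2 : ℤ) ∣ (2 * x + (β + 1) * y + δ - (2 * ε - β * δ)) :=
      ⟨x + (m + 1) * y + δ + m * δ - ε, by rw [hm]; ring⟩
    obtain ⟨j, hj1, hjn, e, he, hAe, hBe⟩ := factor_pow2 _ _ n key hdA hdB
    obtain ⟨j', rfl⟩ : ∃ j', j = j' + 1 := ⟨j - 1, by omega⟩
    have hq : n - (j' + 1) = (n - j' - 2) + 1 := by omega
    rw [hq] at hBe
    refine ⟨j' + 2, e, by omega, by omega, he, ?_, ?_⟩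
    all_goals rw [show j' + 2 - 2 = j' from by omega,
      show n - (j' + 2) = n - j' - 2 from by omega]
    · have hy2 : 2 * y = 2 * (e * 2 ^ (n - j' - 2) - e * 2 ^ j' + (2 * ε - β * δ)) := by
        linear_combination hBe - hAe
      have hy : y = e * 2 ^ (n - j' - 2) - e * 2 ^ j' + (2 * ε - β * δ) := by linarith
      linear_combination hAe - (β - 1) * hy
    · have hy2 : 2 * y = 2 * (e * 2 ^ (n - j' - 2) - e * 2 ^ j' + (2 * ε - β * δ)) := by
        linear_combination hBe - hAe
      linarith
  · rintro ⟨i, e, hi2, hin, he, hx, hy⟩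
    have he2 : e ^ 2 = 1 := by rcases he with rfl | rfl <;> norm_num
    have hpow : (2 : ℤ) ^ (i - 2) * 2 ^ (n - i) * 4 = 2 ^ n := by
      rw [show (4 : ℤ) = 2 ^ 2 from by norm_num, ← pow_add, ← pow_add]
      congr 1
      omega
    have hu : 2 * x + β * y + δ = e * (2 ^ (i - 2) + 2 ^ (n - i)) := by
      linear_combination hx + β * hy
    have hv : y - (2 * ε - β * δ) = e * (2 ^ (n - i) - 2 ^ (i - 2)) := by
      linear_combination hy
    have h4 : 4 * (x ^ 2 + β * x * y + γ * y ^ 2 + δ * x + ε * y + J) = 0 := by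
      linear_combination (2 * x + β * y + δ + e * (2 ^ (i - 2) + 2 ^ (n - i))) * hu -
        (y - (2 * ε - β * δ) + e * (2 ^ (n - i) - 2 ^ (i - 2))) * hv +
        4 * 2 ^ (i - 2) * 2 ^ (n - i) * he2 + hpow - hI - y ^ 2 * hβγ
    linarith
end

section
/- Let β, γ, δ, ε, J be integers with β² − 4γ = 1, γ ≠ 0, and I = δ² − 4J − (2ε − βδ)² = 2ⁿ for some integer n ≥ 2. Then the set of integer pairs (x, y) satisfying x² + βxy + γy² + δx + εy + J = 0 has exactly 2(n − 1) elements. -/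
lemma divpair (s : ℤ) (m : ℕ) (h : s ∣ 2^m) : ∃ i ≤ m, s.natAbs = 2^i := by
  have h2 : s.natAbs ∣ 2^m := by
    have := Int.natAbs_dvd_natAbs.2 h
    rw [Int.natAbs_pow] at this; exact_mod_cast this
  obtain ⟨i, hi, he⟩ := (Nat.dvd_prime_pow Nat.prime_two).1 h2
  exact ⟨i, hi, he⟩

lemma count_pow (m : ℕ) :
    {p : ℤ × ℤ | p.1 * p.2 = 2 ^ m}.ncard = 2 * (m + 1) := by
  classical
  set F : Finset (ℤ × ℤ) :=
    ((Finset.range (m+1)).image (fun i => (((2:ℤ)^i, (2:ℤ)^(m-i)) : ℤ × ℤ))) ∪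
    ((Finset.range (m+1)).image (fun i => ((-(2:ℤ)^i, -(2:ℤ)^(m-i)) : ℤ × ℤ))) with hF
  have hinj : ∀ i j : ℕ, (2:ℤ)^i = 2^j → i = j := by
    intro i j h
    have : (2:ℕ)^i = 2^j := by exact_mod_cast h
    exact Nat.pow_right_injective le_rfl this
  have hset : {p : ℤ × ℤ | p.1 * p.2 = 2 ^ m} = ↑F := by
    ext ⟨s, t⟩
    simp only [Set.mem_setOf_eq, hF, Finset.coe_union, Set.mem_union, Finset.coe_image,
      Set.mem_image, Finset.mem_coe, Finset.mem_range, Prod.mk.injEq]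
    constructor
    · intro hst
      have hs0 : s ≠ 0 := by
        rintro rfl; simp at hst
        exact pow_ne_zero m (two_ne_zero) hst.symm
      have hsd : s ∣ 2^m := ⟨t, hst.symm⟩
      obtain ⟨i, hi, he⟩ := divpair s m hsd
      have habs : s = 2^i ∨ s = -(2^i) := by
        rcases Int.natAbs_eq s with h' | h'
        · left; rw [h', he]; push_cast; ring
        · right; rw [h', he]; push_cast; ring
      have hpow : (2:ℤ)^i * 2^(m-i) = 2^m := by
        rw [← pow_add]; congr 1; omega
      rcases habs with rfl | rfl
      · left; refine ⟨i, by omega, rfl, ?_⟩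
        have h2 : (2:ℤ)^i ≠ 0 := pow_ne_zero _ two_ne_zero
        have := hst.trans hpow.symm
        exact (mul_left_cancel₀ h2 this).symm
      · right; refine ⟨i, by omega, rfl, ?_⟩
        have h2 : -(2:ℤ)^i ≠ 0 := neg_ne_zero.2 (pow_ne_zero _ two_ne_zero)
        have : -(2:ℤ)^i * t = -(2:ℤ)^i * -(2^(m-i)) := by
          rw [hst, neg_mul_neg, hpow]
        exact (mul_left_cancel₀ h2 this).symm
    · rintro (⟨i, hi, rfl, rfl⟩ | ⟨i, hi, rfl, rfl⟩)
      · rw [← pow_add]; congr 1; omega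
      · rw [neg_mul_neg, ← pow_add]; congr 1; omega
  rw [hset, Set.ncard_coe_finset, hF]
  rw [Finset.card_union_of_disjoint]
  · rw [Finset.card_image_of_injective, Finset.card_image_of_injective,
      Finset.card_range]
    · ring
    · intro i j h
      exact hinj i j (by simpa using congrArg Prod.fst h)
    · intro i j h
      exact hinj i j (congrArg Prod.fst h)
  · rw [Finset.disjoint_left]
    rintro ⟨a, b⟩ h1 h2
    simp only [Finset.mem_image, Finset.mem_range, Prod.mk.injEq] at h1 h2
    obtain ⟨i, -, rfl, -⟩ := h1
    obtain ⟨j, -, hj, -⟩ := h2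
    have : (0:ℤ) < 2^i := by positivity
    have : (0:ℤ) < 2^j := by positivity
    omega

theorem stmt_13 (β γ δ ε J : ℤ) (hβγ : β ^ 2 - 4 * γ = 1) (hγ : γ ≠ 0)
    (n : ℕ) (hn : 2 ≤ n)
    (hI : δ ^ 2 - 4 * J - (2 * ε - β * δ) ^ 2 = 2 ^ n) :
    {p : ℤ × ℤ |
      p.1 ^ 2 + β * p.1 * p.2 + γ * p.2 ^ 2 + δ * p.1 + ε * p.2 + J = 0}.ncard =
      2 * (n - 1) := by
  -- β is odd
  obtain ⟨b, rfl⟩ : ∃ b, β = 2 * b + 1 := by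
    rcases Int.even_or_odd β with ⟨c, hc⟩ | ⟨c, hc⟩
    · exfalso
      have h4 : 4 * (c ^ 2 - γ) = 1 := by subst hc; linear_combination hβγ
      omega
    · exact ⟨c, hc⟩
  have hγ' : γ = b * (b + 1) := by
    have h4 : 4 * γ = 4 * (b * (b + 1)) := by linear_combination -hβγ
    omega
  subst hγ'
  set m : ℕ := n - 2 with hm
  have hn2 : n = m + 2 := by omega
  set Q : ℤ := ε - b * δ with hQ
  set P : ℤ := δ - Q with hP
  have hPQ : P * Q - J = 2 ^ m := by
    have hc : (4 : ℤ) * (P * Q - J) = 2 ^ n := by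
      rw [hP, hQ]; linear_combination hI
    have : (2:ℤ) ^ n = 4 * 2 ^ m := by
      rw [hn2, pow_add]; ring
    rw [this] at hc
    exact mul_left_cancel₀ (by norm_num) hc
  have hJ : J = P * Q - 2 ^ m := by linarith
  subst hJ
  -- the equivalence
  have key : ∀ x y : ℤ,
      x ^ 2 + (2 * b + 1) * x * y + b * (b + 1) * y ^ 2 + δ * x + ε * y +
        (P * Q - 2 ^ m) = 0 ↔
      (x + b * y + Q) * (x + (b + 1) * y + P) = 2 ^ m := by
    intro x y
    constructor <;> intro h
    · rw [hP, hQ]; rw [hP, hQ] at h; linear_combination h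
    · rw [hP, hQ] at h; linear_combination h
  -- linear change of variables
  let e : ℤ × ℤ ≃ ℤ × ℤ :=
    { toFun := fun p => (p.1 + b * p.2 + Q, p.1 + (b + 1) * p.2 + P)
      invFun := fun q => (q.1 - Q - b * (q.2 - P - (q.1 - Q)), q.2 - P - (q.1 - Q))
      left_inv := by rintro ⟨x, y⟩; dsimp; rw [Prod.mk.injEq]; constructor <;> ring
      right_inv := by rintro ⟨s, t⟩; dsimp; rw [Prod.mk.injEq]; constructor <;> ring }
  have hpre : {p : ℤ × ℤ |
      p.1 ^ 2 + (2 * b + 1) * p.1 * p.2 + b * (b + 1) * p.2 ^ 2 + δ * p.1 + ε * p.2 +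
        (P * Q - 2 ^ m) = 0} = e ⁻¹' {p : ℤ × ℤ | p.1 * p.2 = 2 ^ m} := by
    ext ⟨x, y⟩
    simp only [Set.mem_setOf_eq, Set.mem_preimage, e, Equiv.coe_fn_mk]
    exact key x y
  rw [hpre, ← Equiv.symm_symm e, ← Equiv.image_eq_preimage_symm,
    Set.ncard_image_of_injective _ e.symm.injective, count_pow]
  omega
end

section
/- Let β, δ, ε be integers with β odd, and let n ≥ 2 be an integer. For an integer i with 2 ≤ i ≤ n and e ∈ {1, −1}, define the point P(i, e) = (x, y) with x = (e·2^{i−2}(β + 1) − e·2^{n−i}(β − 1) − δ − (2ε − βδ)β)/2 (computed as a rational number) and y = e·2^{n−i} − e·2^{i−2} + (2ε − βδ). Then the map (i, e) ↦ P(i, e) is injective: if (i, e) ≠ (j, e') with 2 ≤ i, j ≤ n and e, e' ∈ {1, −1}, then P(i, e) ≠ P(j, e'). -/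
lemma pow2_inj (a b : ℕ) (h : (2:ℚ)^a = (2:ℚ)^b) : a = b := by
  have : ((2^a : ℕ) : ℚ) = ((2^b : ℕ) : ℚ) := by push_cast; exact h
  exact Nat.pow_right_injective (by norm_num) (Nat.cast_injective this)

theorem stmt_14 (β δ ε : ℤ) (hβ : Odd β) (n : ℕ) (hn : 2 ≤ n) :
    ∀ i j : ℕ, 2 ≤ i → i ≤ n → 2 ≤ j → j ≤ n →
      ∀ e e' : ℤ, (e = 1 ∨ e = -1) → (e' = 1 ∨ e' = -1) → (i, e) ≠ (j, e') →
      ((((e : ℚ) * 2 ^ (i - 2) * ((β : ℚ) + 1) - (e : ℚ) * 2 ^ (n - i) * ((β : ℚ) - 1) -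
            (δ : ℚ) - (2 * (ε : ℚ) - (β : ℚ) * (δ : ℚ)) * (β : ℚ)) / 2,
        e * 2 ^ (n - i) - e * 2 ^ (i - 2) + (2 * ε - β * δ)) : ℚ × ℤ) ≠
      ((((e' : ℚ) * 2 ^ (j - 2) * ((β : ℚ) + 1) - (e' : ℚ) * 2 ^ (n - j) * ((β : ℚ) - 1) -
            (δ : ℚ) - (2 * (ε : ℚ) - (β : ℚ) * (δ : ℚ)) * (β : ℚ)) / 2,
        e' * 2 ^ (n - j) - e' * 2 ^ (j - 2) + (2 * ε - β * δ)) : ℚ × ℤ) := by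
  intro i j hi hin hj hjn e e' he he' hne heq
  have hx : ((e : ℚ) * 2 ^ (i - 2) * ((β : ℚ) + 1) - (e : ℚ) * 2 ^ (n - i) * ((β : ℚ) - 1) -
            (δ : ℚ) - (2 * (ε : ℚ) - (β : ℚ) * (δ : ℚ)) * (β : ℚ)) / 2 =
      ((e' : ℚ) * 2 ^ (j - 2) * ((β : ℚ) + 1) - (e' : ℚ) * 2 ^ (n - j) * ((β : ℚ) - 1) -
            (δ : ℚ) - (2 * (ε : ℚ) - (β : ℚ) * (δ : ℚ)) * (β : ℚ)) / 2 :=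
    congrArg Prod.fst heq
  have hyZ : e * 2 ^ (n - i) - e * 2 ^ (i - 2) + (2 * ε - β * δ) =
      e' * 2 ^ (n - j) - e' * 2 ^ (j - 2) + (2 * ε - β * δ) := congrArg Prod.snd heq
  have hy : (e : ℚ) * 2 ^ (n - i) - (e : ℚ) * 2 ^ (i - 2) =
      (e' : ℚ) * 2 ^ (n - j) - (e' : ℚ) * 2 ^ (j - 2) := by
    have := congrArg (fun z : ℤ => (z : ℚ)) hyZ
    push_cast at this
    linarith
  have hA : (e : ℚ) * 2 ^ (i - 2) = (e' : ℚ) * 2 ^ (j - 2) := by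
    linear_combination hx + (((β:ℚ) - 1) / 2) * hy
  have hpos : (0:ℚ) < 2 ^ (i - 2) := by positivity
  have hpos' : (0:ℚ) < 2 ^ (j - 2) := by positivity
  rcases he with rfl | rfl <;> rcases he' with rfl | rfl <;> push_cast at hA
  · have h2 : (2:ℚ) ^ (i - 2) = (2:ℚ) ^ (j - 2) := by linarith
    have := pow2_inj _ _ h2
    exact hne (by simp [show i = j by omega])
  · linarith
  · linarith
  · have h2 : (2:ℚ) ^ (i - 2) = (2:ℚ) ^ (j - 2) := by linarith
    have := pow2_inj _ _ h2
    exact hne (by simp [show i = j by omega])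
end
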